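/- arXiv:1309.7433 — 4 statements merged into one kernel-verified Lean document; each statement's English description precedes it below -/
import Mathlib

section
/- Let f = h + conj(g) with h(z) = z + Σ a_j z^j analytic on the unit disk satisfying Re(1 + z h''(z)/h'(z)) > -1/2, and g analytic with g(0)=0 and g'(z) = e^{iθ} z h'(z). Then the coefficients b_2, b_3 of g satisfy |b_3 - λ b_2²| ≤ 1 + |λ|/4 for every real λ. -/
/-!
Since `g' = e^{iθ} z h'`, comparing Taylor coefficients gives `b₂ = e^{iθ}/2` and
`b₃ = e^{iθ} h''(0)/3`, so it suffices to show `|h''(0)| ≤ 3`. The function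
`q = 1 + (2/3) z h''/h'` has positive real part and `q(0) = 1`, so Carathéodory's bound
`|q'(0)| ≤ 2` (Schwarz's lemma for the Cayley transform `(q - 1)/(q + 1)`) gives `|h''(0)| ≤ 3`.

For `q` to be holomorphic, `h'` must not vanish; the hypothesis does not say so directly, since
`z h''/h'` is `0` at zeros of `h'`. At a zero `z₀ ≠ 0` of order `n` we have
`(z - z₀) h''/h' → n`, so along the radius `z = t z₀` the real part of `z h''/h'` behaves like
`n t/(t - 1) → -∞` as `t → 1⁻`, contradicting the lower bound.
-/

open Complex Metric Filter Topology

theorem AnalyticAt.tendsto_sub_mul_logDeriv {f : ℂ → ℂ} {x : ℂ} {n : ℕ} (hf : AnalyticAt ℂ f x)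
    (hn : analyticOrderAt f x = n) :
    Tendsto (fun w ↦ (w - x) * logDeriv f w) (𝓝[≠] x) (𝓝 n) := by
  obtain ⟨u, hu, hux, hfu⟩ := hf.analyticOrderAt_eq_natCast.mp hn
  have hlim : Tendsto (fun w ↦ n + (w - x) * logDeriv u w) (𝓝[≠] x) (𝓝 n) := by
    have : ContinuousAt (logDeriv u) x := hu.deriv.continuousAt.div hu.continuousAt hux
    simpa using (show ContinuousAt (fun w ↦ n + (w - x) * logDeriv u w) x by fun_prop)
      |>.tendsto.mono_left nhdsWithin_le_nhds
  refine hlim.congr' ?_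
  filter_upwards [self_mem_nhdsWithin, nhdsWithin_le_nhds hfu.eventually_nhds,
    nhdsWithin_le_nhds (hu.continuousAt.eventually_ne hux),
    nhdsWithin_le_nhds hu.eventually_analyticAt] with w hwx hfw huw hua
  have hwx' : w - x ≠ 0 := sub_ne_zero.mpr hwx
  rw [(logDeriv_congr_nhds (f := f) (g := fun z ↦ (z - x) ^ n * u z)
      (hfw.mono fun z hz ↦ by simpa using hz)).eq_of_nhds,
    logDeriv_mul (f := fun z ↦ (z - x) ^ n) w (pow_ne_zero _ hwx') huw (by fun_prop)
      hua.differentiableAt,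
    logDeriv_fun_pow (by fun_prop)]
  have hlin : logDeriv (fun z ↦ z - x) w = 1 / (w - x) := by simp [logDeriv_apply]
  rw [hlin]
  field_simp

theorem tendsto_ofReal_mul_nhdsLT_one {z₀ : ℂ} (hz₀ : z₀ ≠ 0) :
    Tendsto (fun t : ℝ ↦ (t : ℂ) * z₀) (𝓝[<] 1) (𝓝[≠] z₀) := by
  refine tendsto_nhdsWithin_iff.mpr ⟨?_, ?_⟩
  · exact ((continuous_ofReal.mul continuous_const).tendsto' 1 z₀ (by simp)).mono_left
      nhdsWithin_le_nhds
  · filter_upwards [self_mem_nhdsWithin] with t ht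
    simpa [hz₀] using ht.ne

theorem AnalyticAt.tendsto_re_mul_logDeriv_ofReal_mul_atBot {f : ℂ → ℂ} {z₀ : ℂ}
    (hf : AnalyticAt ℂ f z₀) (hz₀ : z₀ ≠ 0) (hzero : f z₀ = 0) (hord : analyticOrderAt f z₀ ≠ ⊤) :
    Tendsto (fun t : ℝ ↦ (t * z₀ * logDeriv f (t * z₀)).re) (𝓝[<] 1) atBot := by
  obtain ⟨n, hn⟩ := ENat.ne_top_iff_exists.mp hord
  have hn0 : 0 < n := by
    refine Nat.pos_of_ne_zero fun h ↦ ?_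
    subst h
    exact (analyticOrderAt_eq_zero.mp hn.symm).resolve_left (not_not.mpr hf) hzero
  have hres : Tendsto (fun t : ℝ ↦ ((t * z₀ - z₀) * logDeriv f (t * z₀)).re) (𝓝[<] 1) (𝓝 n) :=
    (continuous_re.tendsto _).comp
      ((hf.tendsto_sub_mul_logDeriv hn.symm).comp (tendsto_ofReal_mul_nhdsLT_one hz₀))
  have hpole : Tendsto (fun t : ℝ ↦ (t - 1)⁻¹ * t) (𝓝[<] 1) atBot := by
    refine Tendsto.atBot_mul_pos one_pos (Tendsto.inv_tendsto_nhdsLT_zero ?_)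
      (tendsto_id.mono_left nhdsWithin_le_nhds)
    refine tendsto_nhdsWithin_iff.mpr ⟨?_, ?_⟩
    · exact ((continuous_sub_right 1).tendsto' 1 0 (sub_self 1)).mono_left nhdsWithin_le_nhds
    · filter_upwards [self_mem_nhdsWithin] with t ht
      simpa using ht
  refine (hpole.atBot_mul_pos (by exact_mod_cast hn0) hres).congr' ?_
  filter_upwards [self_mem_nhdsWithin] with t ht
  have ht1 : (t : ℂ) - 1 ≠ 0 := by exact_mod_cast sub_ne_zero.mpr ht.ne
  rw [show (t : ℂ) * z₀ - z₀ = (t - 1 : ℝ) * z₀ by push_cast; ring, ← re_ofReal_mul]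
  congr 1
  push_cast
  field_simp

theorem AnalyticOnNhd.ne_zero_of_lt_re_mul_logDeriv {f : ℂ → ℂ} {U : Set ℂ} {M : ℝ}
    (hU : IsOpen U) (hUc : IsPreconnected U) (h0U : 0 ∈ U) (hf : AnalyticOnNhd ℂ f U)
    (hf0 : f 0 ≠ 0) (hM : ∀ z ∈ U, M < (z * logDeriv f z).re) {z₀ : ℂ} (hz₀ : z₀ ∈ U) :
    f z₀ ≠ 0 := by
  intro hzero
  have hne : z₀ ≠ 0 := by rintro rfl; exact hf0 hzero
  have hord : analyticOrderAt f z₀ ≠ ⊤ :=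
    analyticOrderAt_ne_top_of_isPreconnected hf hUc h0U hz₀
      (by simp [analyticOrderAt_eq_zero.mpr (Or.inr hf0)])
  have hin : ∀ᶠ t : ℝ in 𝓝[<] 1, (t : ℂ) * z₀ ∈ U :=
    (tendsto_ofReal_mul_nhdsLT_one hne).mono_right nhdsWithin_le_nhds
      |>.eventually (hU.mem_nhds hz₀)
  obtain ⟨t, htU, htM⟩ := (hin.and ((hf z₀ hz₀).tendsto_re_mul_logDeriv_ofReal_mul_atBot hne
    hzero hord |>.eventually_lt_atBot M)).exists
  exact (hM _ htU).not_gt htM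

theorem norm_sub_one_div_add_one_lt_one {w : ℂ} (hw : 0 < w.re) : ‖(w - 1) / (w + 1)‖ < 1 := by
  have hpos : 0 < ‖w + 1‖ :=
    (show 0 < (w + 1).re by rw [add_re, one_re]; linarith).trans_le (re_le_norm _)
  rw [norm_div, div_lt_one hpos, ← sq_lt_sq₀ (norm_nonneg _) hpos.le, Complex.sq_norm,
    Complex.sq_norm]
  simp only [normSq_apply, sub_re, sub_im, add_re, add_im, one_re, one_im]
  nlinarith

theorem norm_deriv_le_two_of_re_pos {q : ℂ → ℂ} (hq : DifferentiableOn ℂ q (ball 0 1))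
    (hq0 : q 0 = 1) (hre : ∀ z ∈ ball (0 : ℂ) 1, 0 < (q z).re) : ‖deriv q 0‖ ≤ 2 := by
  have hne : ∀ z ∈ ball (0 : ℂ) 1, q z + 1 ≠ 0 := fun z hz ↦
    ne_of_apply_ne re (ne_of_gt (by rw [add_re, one_re, zero_re]; linarith [hre z hz]))
  set w : ℂ → ℂ := fun z ↦ (q z - 1) / (q z + 1)
  have hmaps : Set.MapsTo w (ball 0 1) (closedBall (w 0) 1) := fun z hz ↦ by
    simpa [w, hq0] using (norm_sub_one_div_add_one_lt_one (hre z hz)).le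
  have hwd : DifferentiableOn ℂ w (ball 0 1) := (hq.sub_const 1).div (hq.add_const 1) hne
  have hschwarz := norm_deriv_le_div_of_mapsTo_ball hwd hmaps one_pos
  have hqd : HasDerivAt q (deriv q 0) 0 :=
    (hq.differentiableAt (ball_mem_nhds 0 one_pos)).hasDerivAt
  have hw' : HasDerivAt w (deriv q 0 / 2) 0 :=
    ((hqd.sub_const 1).div (hqd.add_const 1) (by simp [hq0])).congr_deriv (by rw [hq0]; ring)
  rwa [hw'.deriv, norm_div, norm_ofNat, div_one, div_le_one two_pos] at hschwarz

theorem AnalyticOnNhd.norm_logDeriv_zero_le {f : ℂ → ℂ} {β : ℝ}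
    (hf : AnalyticOnNhd ℂ f (ball 0 1)) (hf0 : f 0 ≠ 0)
    (hre : ∀ z ∈ ball (0 : ℂ) 1, -β < (z * logDeriv f z).re) : ‖logDeriv f 0‖ ≤ 2 * β := by
  have hβ : 0 < β := by simpa using hre 0 (mem_ball_self one_pos)
  have hne : ∀ z ∈ ball (0 : ℂ) 1, f z ≠ 0 := fun z hz ↦
    hf.ne_zero_of_lt_re_mul_logDeriv isOpen_ball (convex_ball 0 1).isPreconnected
      (mem_ball_self one_pos) hf0 hre hz
  have hL : DifferentiableOn ℂ (logDeriv f) (ball 0 1) :=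
    hf.deriv.differentiableOn.div hf.differentiableOn hne
  set q : ℂ → ℂ := fun z ↦ 1 + (β⁻¹ : ℝ) * (z * logDeriv f z)
  have hq : DifferentiableOn ℂ q (ball 0 1) :=
    ((differentiableOn_id.mul hL).const_mul _).const_add 1
  have hqre : ∀ z ∈ ball (0 : ℂ) 1, 0 < (q z).re := fun z hz ↦ by
    have := mul_pos (inv_pos.mpr hβ) (neg_lt_iff_pos_add'.mp (hre z hz))
    rw [mul_add, inv_mul_cancel₀ hβ.ne'] at this
    simpa [q, re_ofReal_mul] using this
  have hLd : DifferentiableAt ℂ (logDeriv f) 0 := hL.differentiableAt (ball_mem_nhds 0 one_pos)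
  have hqd : HasDerivAt q ((β⁻¹ : ℝ) * logDeriv f 0) 0 :=
    ((((hasDerivAt_id 0).mul hLd.hasDerivAt).const_mul _).const_add 1).congr_deriv (by simp)
  have := norm_deriv_le_two_of_re_pos hq (by simp [q]) hqre
  rw [hqd.deriv, norm_mul, norm_real, Real.norm_of_nonneg (inv_pos.mpr hβ).le] at this
  rwa [inv_mul_le_iff₀ hβ, mul_comm] at this

theorem AnalyticOnNhd.norm_deriv_zero_le_of_lt_re {φ : ℂ → ℂ} {α : ℝ}
    (hφ : AnalyticOnNhd ℂ φ (ball 0 1)) (hφ0 : φ 0 = 1)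
    (hre : ∀ z ∈ ball (0 : ℂ) 1, α < (1 + z * deriv φ z / φ z).re) :
    ‖deriv φ 0‖ ≤ 2 * (1 - α) := by
  have hre' : ∀ z ∈ ball (0 : ℂ) 1, -(1 - α) < (z * logDeriv φ z).re := fun z hz ↦ by
    have := hre z hz
    rw [mul_div_assoc, ← logDeriv_apply, add_re, one_re] at this
    linarith
  simpa [logDeriv_apply, hφ0] using hφ.norm_logDeriv_zero_le (by simp [hφ0]) hre'

theorem hasFPowerSeriesOnBall_ofScalars_of_hasSum {f : ℂ → ℂ} {c : ℕ → ℂ} {r : NNReal}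
    (hr : 0 < r) (hf : ∀ z ∈ ball (0 : ℂ) r, HasSum (fun n ↦ c n * z ^ n) (f z)) :
    HasFPowerSeriesOnBall f (FormalMultilinearSeries.ofScalars ℂ c) 0 r where
  r_le := by
    refine ENNReal.le_of_forall_nnreal_lt fun ρ hρ ↦ ?_
    have hρ' : ((ρ : ℝ) : ℂ) ∈ ball (0 : ℂ) r := by simpa using hρ
    refine FormalMultilinearSeries.le_radius_of_tendsto _ (l := 0) ?_
    simpa [FormalMultilinearSeries.ofScalars_norm] using
      (hf _ hρ').summable.tendsto_atTop_zero.norm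
  r_pos := by simpa using hr
  hasSum := fun {y} hy ↦ by
    simpa [FormalMultilinearSeries.ofScalars_apply_eq, mul_comm] using hf y (by simpa using hy)

theorem iteratedDeriv_eq_factorial_mul_of_hasSum {f : ℂ → ℂ} {c : ℕ → ℂ} {r : NNReal}
    (hr : 0 < r) (hf : ∀ z ∈ ball (0 : ℂ) r, HasSum (fun n ↦ c n * z ^ n) (f z)) (n : ℕ) :
    iteratedDeriv n f 0 = n.factorial * c n := by
  have hp := (hasFPowerSeriesOnBall_ofScalars_of_hasSum hr hf).hasFPowerSeriesAt
  have := congrArg (FormalMultilinearSeries.coeff · n)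
    (hp.analyticAt.hasFPowerSeriesAt.eq_formalMultilinearSeries hp)
  simp only [FormalMultilinearSeries.coeff_ofScalars] at this
  rw [div_eq_iff (Nat.cast_ne_zero.mpr n.factorial_ne_zero)] at this
  rw [this, mul_comm]

theorem iteratedDeriv_succ_id_mul_zero {ψ : ℂ → ℂ} {n : ℕ} (hψ : ContDiffAt ℂ (n + 1) ψ 0) :
    iteratedDeriv (n + 1) (fun z ↦ z * ψ z) 0 = (n + 1) * iteratedDeriv n ψ 0 := by
  rw [iteratedDeriv_fun_mul (by fun_prop) hψ, Finset.sum_eq_single 1]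
  · simp [iteratedDeriv_fun_id_zero]
  · intro i _ hi
    simp [iteratedDeriv_fun_id_zero, hi]
  · simp

theorem iteratedDeriv_add_two_zero_of_deriv_eventuallyEq {g ψ : ℂ → ℂ} {n : ℕ}
    (hg : deriv g =ᶠ[𝓝 0] fun z ↦ z * ψ z) (hψ : ContDiffAt ℂ (n + 1) ψ 0) :
    iteratedDeriv (n + 2) g 0 = (n + 1) * iteratedDeriv n ψ 0 := by
  rw [iteratedDeriv_succ', hg.iteratedDeriv_eq, iteratedDeriv_succ_id_mul_zero hψ]

theorem coeff_two_and_coeff_three_of_deriv_eventuallyEq {g ψ : ℂ → ℂ} {b : ℕ → ℂ} {r : NNReal}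
    (hr : 0 < r) (hsum : ∀ z ∈ ball (0 : ℂ) r, HasSum (fun n ↦ b n * z ^ n) (g z))
    (hψ : AnalyticAt ℂ ψ 0) (hg : deriv g =ᶠ[𝓝 0] fun z ↦ z * ψ z) :
    b 2 = ψ 0 / 2 ∧ b 3 = deriv ψ 0 / 3 := by
  have hcoeff := iteratedDeriv_eq_factorial_mul_of_hasSum hr hsum
  have hb2 : 2 * b 2 = ψ 0 := by
    simpa [hcoeff] using iteratedDeriv_add_two_zero_of_deriv_eventuallyEq (n := 0) hg hψ.contDiffAt
  have hb3 : 6 * b 3 = 2 * deriv ψ 0 := by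
    simpa [hcoeff, Nat.factorial, one_add_one_eq_two] using
      iteratedDeriv_add_two_zero_of_deriv_eventuallyEq (n := 1) hg hψ.contDiffAt
  exact ⟨by linear_combination hb2 / 2, by linear_combination hb3 / 6⟩

theorem stmt_3_general (h g : ℂ → ℂ) (b : ℕ → ℂ) (θ lam : ℝ)
    (hanal : AnalyticOn ℂ h (ball (0:ℂ) 1))
    (h1 : deriv h 0 = 1)
    (hg : ∀ z ∈ ball (0:ℂ) 1,
      deriv g z = Complex.exp (θ * Complex.I) * z * deriv h z)
    (hre : ∀ z ∈ ball (0:ℂ) 1,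
      (1 + z * deriv (deriv h) z / deriv h z).re > -1/2)
    (gcoef : ∀ z ∈ ball (0:ℂ) 1, HasSum (fun j : ℕ => b j * z ^ j) (g z)) :
    ‖b 3 - (lam : ℂ) * (b 2) ^ 2‖ ≤ 1 + |lam| / 4 := by
  have hφ : AnalyticOnNhd ℂ (deriv h) (ball 0 1) :=
    (isOpen_ball.analyticOn_iff_analyticOnNhd.mp hanal).deriv
  have hD := hφ.norm_deriv_zero_le_of_lt_re h1 hre
  set c := exp (θ * I)
  have hgψ : deriv g =ᶠ[𝓝 0] fun z ↦ z * (c * deriv h z) := by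
    filter_upwards [ball_mem_nhds 0 one_pos] with z hz
    rw [hg z hz]
    ring
  obtain ⟨hb2, hb3⟩ := coeff_two_and_coeff_three_of_deriv_eventuallyEq (r := 1)
    (ψ := fun z ↦ c * deriv h z) one_pos (by simpa using gcoef)
    (analyticAt_const.mul (hφ 0 (mem_ball_self one_pos))) hgψ
  have hc : ‖c‖ = 1 := by simp [c, norm_exp]
  calc ‖b 3 - lam * b 2 ^ 2‖ = ‖c * deriv (deriv h) 0 / 3 - lam * (c / 2) ^ 2‖ := by
        simp only [hb2, hb3, deriv_const_mul_field', h1, mul_one]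
    _ ≤ ‖c * deriv (deriv h) 0 / 3‖ + ‖(lam : ℂ) * (c / 2) ^ 2‖ := norm_sub_le _ _
    _ = ‖deriv (deriv h) 0‖ / 3 + |lam| / 4 := by
      norm_num [hc, norm_pow, div_pow, mul_one_div]
    _ ≤ 1 + |lam| / 4 := by linarith

theorem stmt_3 (h g : ℂ → ℂ) (a b : ℕ → ℂ) (θ lam : ℝ)
    (hanal : AnalyticOn ℂ h (ball (0:ℂ) 1))
    (ganal : AnalyticOn ℂ g (ball (0:ℂ) 1))
    (h0 : h 0 = 0) (g0 : g 0 = 0) (h1 : deriv h 0 = 1)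
    (hg : ∀ z ∈ ball (0:ℂ) 1,
      deriv g z = Complex.exp (θ * Complex.I) * z * deriv h z)
    (hre : ∀ z ∈ ball (0:ℂ) 1,
      (1 + z * deriv (deriv h) z / deriv h z).re > -1/2)
    (hcoef : ∀ z ∈ ball (0:ℂ) 1, HasSum (fun j : ℕ => a j * z ^ j) (h z))
    (gcoef : ∀ z ∈ ball (0:ℂ) 1, HasSum (fun j : ℕ => b j * z ^ j) (g z))
    (ha0 : a 0 = 0) (ha1 : a 1 = 1) (hb0 : b 0 = 0) :
    ‖b 3 - (lam : ℂ) * (b 2) ^ 2‖ ≤ 1 + |lam| / 4 :=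
  stmt_3_general h g b θ lam hanal h1 hg hre gcoef
end

section
/- Let F be in HS_p and not an affine mapping (i.e., not of the form z + conj(b_{1,1} z)). Then for every z ∈ 𝔻 \ {0} and every ζ ∈ ℂ with |ζ| = 1, the quantity Φ(z) = (ζ+1)·L[F](z) - (ζ-1)·F(z) is nonzero, where L = z ∂/∂z - z̄ ∂/∂z̄. -/
open Complex Metric Finset

/-- The polyharmonic mapping with coefficients `a`, `b`. -/
noncomputable def polyF (p : ℕ) (a b : ℕ → ℕ → ℂ) (z : ℂ) : ℂ :=
  ∑ k ∈ Finset.Icc 1 p, ((‖z‖ : ℂ)) ^ (2 * (k - 1)) *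
    ∑' j : ℕ, (a k j * z ^ j + (starRingEnd ℂ) (b k j * z ^ j))

/-- The action of `L = z ∂/∂z - z̄ ∂/∂z̄` on the polyharmonic mapping. -/
noncomputable def polyLF (p : ℕ) (a b : ℕ → ℕ → ℂ) (z : ℂ) : ℂ :=
  ∑ k ∈ Finset.Icc 1 p, ((‖z‖ : ℂ)) ^ (2 * (k - 1)) *
    ∑' j : ℕ, (j : ℂ) * (a k j * z ^ j - (starRingEnd ℂ) (b k j * z ^ j))

/-!
Write `Φ = (ζ + 1) L[F] - (ζ - 1) F` as `∑ₖ |z|^{2(k-1)} ∑ⱼ Φₖⱼ`. For `|ζ| = 1` and `j ≥ 1` one has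
`|Φₖⱼ| ≤ 2j (|aₖⱼ| + |bₖⱼ|) |z|^j`, so every term `|z|^{2(k-1)} Φₖⱼ` other than the leading one
`Φ₁₁ = 2z - 2ζ conj(b₁₁ z)` is bounded by `2|z|² (2(k-1) + j)(|aₖⱼ| + |bₖⱼ|)`, and by the
coefficient condition their sum is at most `2|z|² (1 - |b₁₁|)`. Since
`|Φ₁₁| ≥ 2|z| (1 - |b₁₁|)`, this leaves `|Φ(z)| ≥ 2|z| (1 - |z|)(1 - |b₁₁|) > 0`.
-/

open ComplexConjugate

/-- The `j`-th term of `(ζ + 1) L[F] - (ζ - 1) F` within one block `|z|^{2(k-1)} (…)`, where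
`α = a k j` and `β = b k j`. -/
noncomputable def phiTerm (ζ α β z : ℂ) (j : ℕ) : ℂ :=
  (ζ + 1) * (j * (α * z ^ j - conj (β * z ^ j))) - (ζ - 1) * (α * z ^ j + conj (β * z ^ j))

/-- The `j ≥ 2` summands of the `HS_p` coefficient condition for the block `|z|^n`. -/
noncomputable def hsTail (n : ℕ) (α β : ℕ → ℂ) (j : ℕ) : ℝ :=
  if 2 ≤ j then ((n + j : ℕ) : ℝ) * (‖α j‖ + ‖β j‖) else 0

lemma norm_mul_ofReal_add_ofReal_le {ζ : ℂ} (hζ : ‖ζ‖ = 1) {s t : ℝ} (hs : 0 ≤ s)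
    (ht : 0 ≤ t) : ‖ζ * s + t‖ ≤ s + t :=
  calc ‖ζ * s + t‖ ≤ ‖ζ * s‖ + ‖(t : ℂ)‖ := norm_add_le _ _
    _ = s + t := by
      rw [norm_mul, hζ, one_mul, Complex.norm_real, Complex.norm_real, Real.norm_of_nonneg hs,
        Real.norm_of_nonneg ht]

lemma norm_phiTerm_le {ζ : ℂ} (hζ : ‖ζ‖ = 1) (α β z : ℂ) {j : ℕ} (hj : 1 ≤ j) :
    ‖phiTerm ζ α β z j‖ ≤ 2 * j * (‖α‖ + ‖β‖) * ‖z‖ ^ j := by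
  have hj' : (1 : ℝ) ≤ j := by exact_mod_cast hj
  have hA := norm_mul_ofReal_add_ofReal_le hζ (s := j - 1) (t := j + 1) (by linarith)
    (by linarith)
  have hB := norm_mul_ofReal_add_ofReal_le hζ (s := j + 1) (t := j - 1) (by linarith)
    (by linarith)
  -- `(ζ + 1) j ∓ (ζ - 1) = ζ (j ∓ 1) + (j ± 1)` has modulus at most `2 j`
  have hsplit : phiTerm ζ α β z j =
      (ζ * ((j - 1 : ℝ) : ℂ) + ((j + 1 : ℝ) : ℂ)) * (α * z ^ j) -
        (ζ * ((j + 1 : ℝ) : ℂ) + ((j - 1 : ℝ) : ℂ)) * conj (β * z ^ j) := by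
    simp only [phiTerm]; push_cast; ring
  rw [hsplit]
  calc _ ≤ _ := norm_sub_le _ _
    _ = ‖ζ * ((j - 1 : ℝ) : ℂ) + ((j + 1 : ℝ) : ℂ)‖ * (‖α‖ * ‖z‖ ^ j) +
          ‖ζ * ((j + 1 : ℝ) : ℂ) + ((j - 1 : ℝ) : ℂ)‖ * (‖β‖ * ‖z‖ ^ j) := by
        simp only [norm_mul, norm_pow, RCLike.norm_conj]
    _ ≤ (j - 1 + (j + 1)) * (‖α‖ * ‖z‖ ^ j) + (j + 1 + (j - 1)) * (‖β‖ * ‖z‖ ^ j) := by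
        gcongr
    _ = _ := by ring

lemma norm_ofReal_pow_mul_phiTerm_le {ζ : ℂ} (hζ : ‖ζ‖ = 1) (α β : ℂ) {z : ℂ} (hz : ‖z‖ ≤ 1)
    {n j : ℕ} (hj : 1 ≤ j) (hnj : 2 ≤ n + j) :
    ‖(‖z‖ : ℂ) ^ n * phiTerm ζ α β z j‖ ≤ 2 * ‖z‖ ^ 2 * (((n + j : ℕ) : ℝ) * (‖α‖ + ‖β‖)) := by
  rw [norm_mul, norm_pow, Complex.norm_real, norm_norm]
  calc ‖z‖ ^ n * ‖phiTerm ζ α β z j‖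
      ≤ ‖z‖ ^ n * (2 * j * (‖α‖ + ‖β‖) * ‖z‖ ^ j) := by
        gcongr; exact norm_phiTerm_le hζ α β z hj
    _ = 2 * j * (‖α‖ + ‖β‖) * ‖z‖ ^ (n + j) := by ring
    _ ≤ 2 * (n + j : ℕ) * (‖α‖ + ‖β‖) * ‖z‖ ^ 2 := by
        gcongr 2 * ?_ * _ * ?_
        · exact_mod_cast Nat.le_add_left j n
        · exact pow_le_pow_of_le_one (norm_nonneg z) hz hnj
    _ = _ := by ring

lemma norm_phiTerm_one_one_ge {ζ : ℂ} (hζ : ‖ζ‖ = 1) (β z : ℂ) :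
    2 * ‖z‖ * (1 - ‖β‖) ≤ ‖phiTerm ζ 1 β z 1‖ := by
  have hlead : phiTerm ζ 1 β z 1 = 2 * z - 2 * ζ * conj (β * z) := by
    simp only [phiTerm, Nat.cast_one, pow_one, one_mul]; ring
  rw [hlead]
  calc 2 * ‖z‖ * (1 - ‖β‖) = ‖2 * z‖ - ‖2 * ζ * conj (β * z)‖ := by
        simp only [norm_mul, RCLike.norm_conj, hζ, Complex.norm_ofNat]; ring
    _ ≤ _ := norm_sub_norm_le _ _

lemma summable_succ_mul_of_summable_hsTail {α β : ℕ → ℂ} {n : ℕ}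
    (h : Summable (hsTail n α β)) :
    Summable fun j : ℕ => ((j : ℝ) + 1) * (‖α j‖ + ‖β j‖) := by
  rw [← summable_nat_add_iff 2]
  refine (((summable_nat_add_iff 2).mpr h).mul_left 2).of_nonneg_of_le
    (fun j => by positivity) fun j => ?_
  simp only [hsTail, le_add_iff_nonneg_left, zero_le, if_true]
  rw [← mul_assoc]
  gcongr
  push_cast
  linarith [(n.cast_nonneg : (0 : ℝ) ≤ n)]

section Series

variable {α β : ℕ → ℂ} {z : ℂ}

lemma summable_mul_pow_add_conj (hz : ‖z‖ ≤ 1)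
    (h : Summable fun j : ℕ => ((j : ℝ) + 1) * (‖α j‖ + ‖β j‖)) :
    Summable fun j => α j * z ^ j + conj (β j * z ^ j) := by
  refine h.of_norm_bounded fun j => ?_
  have hzj : ‖z‖ ^ j ≤ 1 := pow_le_one₀ (norm_nonneg z) hz
  calc ‖α j * z ^ j + conj (β j * z ^ j)‖ ≤ ‖α j‖ * ‖z‖ ^ j + ‖β j‖ * ‖z‖ ^ j :=
        (norm_add_le _ _).trans_eq (by simp only [norm_mul, norm_pow, RCLike.norm_conj])
    _ ≤ 1 * (‖α j‖ + ‖β j‖) := by nlinarith [norm_nonneg (α j), norm_nonneg (β j)]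
    _ ≤ _ := by gcongr; linarith [(j.cast_nonneg : (0 : ℝ) ≤ j)]

lemma summable_natCast_mul_mul_pow_sub_conj (hz : ‖z‖ ≤ 1)
    (h : Summable fun j : ℕ => ((j : ℝ) + 1) * (‖α j‖ + ‖β j‖)) :
    Summable fun j : ℕ => (j : ℂ) * (α j * z ^ j - conj (β j * z ^ j)) := by
  refine h.of_norm_bounded fun j => ?_
  have hzj : ‖z‖ ^ j ≤ 1 := pow_le_one₀ (norm_nonneg z) hz
  have hsub : ‖α j * z ^ j - conj (β j * z ^ j)‖ ≤ ‖α j‖ + ‖β j‖ := by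
    calc _ ≤ ‖α j‖ * ‖z‖ ^ j + ‖β j‖ * ‖z‖ ^ j :=
          (norm_sub_le _ _).trans_eq (by simp only [norm_mul, norm_pow, RCLike.norm_conj])
      _ ≤ _ := by nlinarith [norm_nonneg (α j), norm_nonneg (β j)]
  rw [norm_mul, Complex.norm_natCast]
  gcongr
  linarith

lemma hasSum_phiTerm (ζ : ℂ) (hz : ‖z‖ ≤ 1)
    (h : Summable fun j : ℕ => ((j : ℝ) + 1) * (‖α j‖ + ‖β j‖)) :
    HasSum (fun j => phiTerm ζ (α j) (β j) z j)
      ((ζ + 1) * ∑' j : ℕ, (j : ℂ) * (α j * z ^ j - conj (β j * z ^ j)) -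
        (ζ - 1) * ∑' j, (α j * z ^ j + conj (β j * z ^ j))) :=
  ((summable_natCast_mul_mul_pow_sub_conj hz h).hasSum.mul_left _).sub
    ((summable_mul_pow_add_conj hz h).hasSum.mul_left _)

lemma norm_ofReal_pow_mul_tsum_hsTail_le {ζ : ℂ} (hζ : ‖ζ‖ = 1) (hz : ‖z‖ ≤ 1) {n : ℕ}
    (h : Summable (hsTail n α β)) :
    ‖(‖z‖ : ℂ) ^ n * ∑' j, (if 2 ≤ j then phiTerm ζ (α j) (β j) z j else 0)‖ ≤
      2 * ‖z‖ ^ 2 * ∑' j, hsTail n α β j := by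
  rw [← tsum_mul_left]
  refine tsum_of_norm_bounded (h.hasSum.mul_left _) fun j => ?_
  simp only [hsTail]
  split_ifs with hj
  · exact norm_ofReal_pow_mul_phiTerm_le hζ _ _ hz (by omega) (by omega)
  · simp

end Series

lemma tsum_eq_add_tsum_ite_two_le {E : Type*} [AddCommGroup E] [TopologicalSpace E]
    [IsTopologicalAddGroup E] [T2Space E] {f : ℕ → E} (hf : Summable f) (h0 : f 0 = 0) :
    ∑' j, f j = f 1 + ∑' j, if 2 ≤ j then f j else 0 := by
  rw [hf.tsum_eq_add_tsum_ite 1]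
  congr 2 with j
  rcases j with _ | _ | j <;> simp [h0]

section Polyharmonic

variable {p : ℕ} {a b : ℕ → ℕ → ℂ} {z : ℂ}

lemma mul_polyLF_sub_mul_polyF_eq (ζ : ℂ) (hz : ‖z‖ ≤ 1)
    (h : ∀ k ∈ Icc 1 p, Summable fun j : ℕ => ((j : ℝ) + 1) * (‖a k j‖ + ‖b k j‖)) :
    (ζ + 1) * polyLF p a b z - (ζ - 1) * polyF p a b z =
      ∑ k ∈ Icc 1 p, (‖z‖ : ℂ) ^ (2 * (k - 1)) * ∑' j, phiTerm ζ (a k j) (b k j) z j := by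
  rw [polyLF, polyF, mul_sum, mul_sum, ← sum_sub_distrib]
  refine sum_congr rfl fun k hk => ?_
  rw [(hasSum_phiTerm ζ hz (h k hk)).tsum_eq]
  ring

lemma norm_mul_polyLF_sub_mul_polyF_sub_phiTerm_le (hp : 1 ≤ p)
    (hzero : ∀ k, a k 0 = 0 ∧ b k 0 = 0)
    (hS : ∀ k ∈ Icc 1 p, Summable (hsTail (2 * (k - 1)) (a k) (b k)))
    {ζ : ℂ} (hζ : ‖ζ‖ = 1) (hz : ‖z‖ ≤ 1) :
    ‖(ζ + 1) * polyLF p a b z - (ζ - 1) * polyF p a b z - phiTerm ζ (a 1 1) (b 1 1) z 1‖ ≤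
      2 * ‖z‖ ^ 2 * (∑ k ∈ Icc 1 p, ∑' j, hsTail (2 * (k - 1)) (a k) (b k) j +
        ∑ k ∈ Icc 2 p, ((2 * k - 1 : ℕ) : ℝ) * (‖a k 1‖ + ‖b k 1‖)) := by
  set c : ℕ → ℂ := fun k => (‖z‖ : ℂ) ^ (2 * (k - 1))
  set tail : ℕ → ℂ := fun k => ∑' j, if 2 ≤ j then phiTerm ζ (a k j) (b k j) z j else 0
  have hIcc : Icc 1 p = insert 1 (Icc 2 p) := (insert_Icc_succ_left_eq_Icc hp).symm
  have h1 : 1 ∉ Icc 2 p := by simp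
  have hsplit : (ζ + 1) * polyLF p a b z - (ζ - 1) * polyF p a b z -
      phiTerm ζ (a 1 1) (b 1 1) z 1 =
        ∑ k ∈ Icc 1 p, c k * tail k + ∑ k ∈ Icc 2 p, c k * phiTerm ζ (a k 1) (b k 1) z 1 := by
    have hblock : ∀ k ∈ Icc 1 p, c k * ∑' j, phiTerm ζ (a k j) (b k j) z j =
        c k * tail k + c k * phiTerm ζ (a k 1) (b k 1) z 1 := by
      intro k hk
      have hsum := (hasSum_phiTerm ζ hz (summable_succ_mul_of_summable_hsTail (hS k hk))).summable
      rw [tsum_eq_add_tsum_ite_two_le hsum (by simp [phiTerm, hzero k])]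
      ring
    rw [mul_polyLF_sub_mul_polyF_eq ζ hz fun k hk => summable_succ_mul_of_summable_hsTail (hS k hk),
      sum_congr rfl hblock, sum_add_distrib, hIcc, sum_insert h1, sum_insert h1]
    simp only [c, Nat.sub_self, mul_zero, pow_zero, one_mul]
    ring
  rw [hsplit, mul_add]
  refine (norm_add_le _ _).trans (add_le_add ?_ ?_) <;> rw [mul_sum] <;>
    refine (norm_sum_le _ _).trans (sum_le_sum fun k hk => ?_)
  · exact norm_ofReal_pow_mul_tsum_hsTail_le hζ hz (hS k hk)
  · obtain ⟨hk2, -⟩ := mem_Icc.mp hk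
    rw [show 2 * k - 1 = 2 * (k - 1) + 1 by omega]
    exact norm_ofReal_pow_mul_phiTerm_le hζ _ _ hz le_rfl (by omega)

end Polyharmonic

theorem stmt_11_general (p : ℕ) (hp : 1 ≤ p) (a b : ℕ → ℕ → ℂ)
    (ha11 : a 1 1 = 1) (hb11 : ‖b 1 1‖ < 1)
    (hzero : ∀ k, a k 0 = 0 ∧ b k 0 = 0)
    (hS : ∀ k ∈ Finset.Icc 1 p, Summable (fun j : ℕ =>
      if 2 ≤ j then ((2 * (k - 1) + j : ℕ) : ℝ) *
        (‖a k j‖ + ‖b k j‖) else 0))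
    (hcond : ∑ k ∈ Finset.Icc 1 p, ∑' j : ℕ,
        (if 2 ≤ j then ((2 * (k - 1) + j : ℕ) : ℝ) *
          (‖a k j‖ + ‖b k j‖) else 0)
      ≤ 1 - ‖b 1 1‖ -
        ∑ k ∈ Finset.Icc 2 p, ((2 * k - 1 : ℕ) : ℝ) *
          (‖a k 1‖ + ‖b k 1‖)) :
    ∀ z ∈ ball (0:ℂ) 1, z ≠ 0 → ∀ ζ : ℂ, ‖ζ‖ = 1 →
      (ζ + 1) * polyLF p a b z - (ζ - 1) * polyF p a b z ≠ 0 := by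
  intro z hz hz0 ζ hζ hΦ
  have hr : ‖z‖ < 1 := mem_ball_zero_iff.mp hz
  have hr0 : 0 < ‖z‖ := norm_pos_iff.mpr hz0
  have hcond' : ∑ k ∈ Icc 1 p, ∑' j, hsTail (2 * (k - 1)) (a k) (b k) j +
      ∑ k ∈ Icc 2 p, ((2 * k - 1 : ℕ) : ℝ) * (‖a k 1‖ + ‖b k 1‖) ≤ 1 - ‖b 1 1‖ := by
    unfold hsTail; linarith
  have hrest := norm_mul_polyLF_sub_mul_polyF_sub_phiTerm_le hp hzero hS hζ hr.le
  rw [hΦ, zero_sub, norm_neg, ha11] at hrest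
  have hle : 2 * ‖z‖ * (1 - ‖b 1 1‖) ≤ 2 * ‖z‖ ^ 2 * (1 - ‖b 1 1‖) :=
    (norm_phiTerm_one_one_ge hζ (b 1 1) z).trans (hrest.trans (by gcongr))
  nlinarith [mul_pos (mul_pos hr0 (sub_pos.mpr hr)) (sub_pos.mpr hb11)]

theorem stmt_11 (p : ℕ) (hp : 1 ≤ p) (a b : ℕ → ℕ → ℂ)
    (ha11 : a 1 1 = 1) (hb11 : ‖b 1 1‖ < 1)
    (hzero : ∀ k, a k 0 = 0 ∧ b k 0 = 0)
    (hS : ∀ k ∈ Finset.Icc 1 p, Summable (fun j : ℕ =>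
      if 2 ≤ j then ((2 * (k - 1) + j : ℕ) : ℝ) *
        (‖a k j‖ + ‖b k j‖) else 0))
    (hcond : ∑ k ∈ Finset.Icc 1 p, ∑' j : ℕ,
        (if 2 ≤ j then ((2 * (k - 1) + j : ℕ) : ℝ) *
          (‖a k j‖ + ‖b k j‖) else 0)
      ≤ 1 - ‖b 1 1‖ -
        ∑ k ∈ Finset.Icc 2 p, ((2 * k - 1 : ℕ) : ℝ) *
          (‖a k 1‖ + ‖b k 1‖))
    (hlt : ‖b 1 1‖ + ∑ k ∈ Finset.Icc 2 p, ((2 * k - 1 : ℕ) : ℝ) *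
          (‖a k 1‖ + ‖b k 1‖) < 1)
    (hnaff : ¬ ∀ z : ℂ, polyF p a b z = z + (starRingEnd ℂ) (b 1 1 * z)) :
    ∀ z ∈ ball (0:ℂ) 1, z ≠ 0 → ∀ ζ : ℂ, ‖ζ‖ = 1 →
      (ζ + 1) * polyLF p a b z - (ζ - 1) * polyF p a b z ≠ 0 :=
  stmt_11_general p hp a b ha11 hb11 hzero hS hcond
end

section
/- Let F be in HC_p and not an affine mapping. Then for every z ∈ 𝔻 \ {0} and every ζ ∈ ℂ with |ζ| = 1, the quantity Ψ(z) = (ζ+1)·L[L[F]](z) - (ζ-1)·L[F](z) is nonzero, where L = z ∂/∂z - z̄ ∂/∂z̄. -/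
open Complex Metric Finset

/-- The action of `L∘L` on the polyharmonic mapping. -/
noncomputable def polyLLF (p : ℕ) (a b : ℕ → ℕ → ℂ) (z : ℂ) : ℂ :=
  ∑ k ∈ Finset.Icc 1 p, ((‖z‖ : ℂ)) ^ (2 * (k - 1)) *
    ∑' j : ℕ, (j : ℂ) ^ 2 * (a k j * z ^ j + (starRingEnd ℂ) (b k j * z ^ j))

/-!
Write `Ψ = ∑ₖ |z|^{2(k-1)} ∑ⱼ ψₖⱼ` with
`ψₖⱼ = aₖⱼ zʲ ((ζ+1)j² - (ζ-1)j) + conj (bₖⱼ zʲ) ((ζ+1)j² + (ζ-1)j)`.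
Since `(ζ+1)s + (ζ-1)t = ζ(s+t) + (s-t)`, for `|ζ| = 1` and `|t| ≤ s` this coefficient has
modulus at most `2s`, so `|ψₖⱼ| ≤ 2j²(|aₖⱼ| + |bₖⱼ|) rʲ` with `r = |z|`. The leading term
`ψ₁₁ = 2(z + ζ conj (b₁₁ z))` has modulus at least `2r(1 - |b₁₁|)`, while every other term
carries a factor `r^{2(k-1)+j} ≤ r²`; by the coefficient condition they add up to at most
`2r²(1 - |b₁₁|) < 2r(1 - |b₁₁|)`.
-/

open ComplexConjugate

noncomputable def coeffWeight (a b : ℕ → ℕ → ℂ) (k j : ℕ) : ℝ :=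
  if 2 ≤ j then ((2 * (k - 1) + j ^ 2 : ℕ) : ℝ) * (‖a k j‖ + ‖b k j‖) else 0

noncomputable def majorant (a b : ℕ → ℕ → ℂ) (r : ℝ) (k j : ℕ) : ℝ :=
  (j : ℝ) ^ 2 * (‖a k j‖ + ‖b k j‖) * r ^ j

def psiTerm (ζ A B z : ℂ) (j : ℕ) : ℂ :=
  (ζ + 1) * ((j : ℂ) ^ 2 * (A * z ^ j + conj (B * z ^ j)))
    - (ζ - 1) * ((j : ℂ) * (A * z ^ j - conj (B * z ^ j)))

lemma norm_add_one_mul_add_sub_one_mul_le {ζ : ℂ} (hζ : ‖ζ‖ = 1) {s t : ℝ} (hts : |t| ≤ s) :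
    ‖(ζ + 1) * s + (ζ - 1) * t‖ ≤ 2 * s := by
  have hsplit : (ζ + 1) * s + (ζ - 1) * t = ζ * ((s + t : ℝ) : ℂ) + ((s - t : ℝ) : ℂ) := by
    push_cast; ring
  obtain ⟨hts₁, hts₂⟩ := abs_le.mp hts
  calc ‖(ζ + 1) * s + (ζ - 1) * t‖ ≤ ‖ζ * ((s + t : ℝ) : ℂ)‖ + ‖((s - t : ℝ) : ℂ)‖ := by
        rw [hsplit]; exact norm_add_le _ _
    _ = (s + t) + (s - t) := by
        rw [norm_mul, hζ, one_mul, Complex.norm_real, Complex.norm_real,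
          Real.norm_of_nonneg (by linarith), Real.norm_of_nonneg (by linarith)]
    _ = 2 * s := by ring

lemma norm_psiTerm_le {ζ : ℂ} (hζ : ‖ζ‖ = 1) (A B z : ℂ) (j : ℕ) :
    ‖psiTerm ζ A B z j‖ ≤ 2 * ((j : ℝ) ^ 2 * (‖A‖ + ‖B‖) * ‖z‖ ^ j) := by
  have hj : |(j : ℝ)| ≤ (j : ℝ) ^ 2 := by
    rw [Nat.abs_cast]
    exact_mod_cast Nat.le_self_pow two_ne_zero j
  have hA := norm_add_one_mul_add_sub_one_mul_le hζ (s := (j : ℝ) ^ 2) (t := -j) (by rwa [abs_neg])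
  have hB := norm_add_one_mul_add_sub_one_mul_le hζ hj
  have hsplit : psiTerm ζ A B z j =
      A * z ^ j * ((ζ + 1) * ((j ^ 2 : ℝ) : ℂ) + (ζ - 1) * ((-j : ℝ) : ℂ))
        + conj (B * z ^ j) * ((ζ + 1) * ((j ^ 2 : ℝ) : ℂ) + (ζ - 1) * ((j : ℝ) : ℂ)) := by
    simp only [psiTerm]; push_cast; ring
  calc ‖psiTerm ζ A B z j‖
      ≤ ‖A‖ * ‖z‖ ^ j * (2 * (j : ℝ) ^ 2) + ‖B‖ * ‖z‖ ^ j * (2 * (j : ℝ) ^ 2) := by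
        rw [hsplit]
        refine (norm_add_le _ _).trans (add_le_add ?_ ?_)
        · rw [norm_mul, norm_mul, norm_pow]; gcongr
        · rw [norm_mul, Complex.norm_conj, norm_mul, norm_pow]; gcongr
    _ = 2 * ((j : ℝ) ^ 2 * (‖A‖ + ‖B‖) * ‖z‖ ^ j) := by ring

lemma norm_mul_add_conj_le (A B z : ℂ) (j : ℕ) :
    ‖A * z ^ j + conj (B * z ^ j)‖ ≤ (‖A‖ + ‖B‖) * ‖z‖ ^ j := by
  refine (norm_add_le _ _).trans_eq ?_
  rw [Complex.norm_conj, norm_mul, norm_mul, norm_pow]; ring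

lemma norm_mul_sub_conj_le (A B z : ℂ) (j : ℕ) :
    ‖A * z ^ j - conj (B * z ^ j)‖ ≤ (‖A‖ + ‖B‖) * ‖z‖ ^ j := by
  refine (norm_sub_le _ _).trans_eq ?_
  rw [Complex.norm_conj, norm_mul, norm_mul, norm_pow]; ring

section

variable (a b : ℕ → ℕ → ℂ)

lemma coeffWeight_nonneg (k j : ℕ) : 0 ≤ coeffWeight a b k j := by
  unfold coeffWeight; split_ifs <;> positivity

lemma pow_mul_majorant_le_of_ne_one {r : ℝ} (hr₀ : 0 ≤ r) (hr₁ : r ≤ 1) (k : ℕ) {j : ℕ}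
    (hj : j ≠ 1) : r ^ (2 * (k - 1)) * majorant a b r k j ≤ r ^ 2 * coeffWeight a b k j := by
  rcases j with _ | _ | j
  · simp [majorant, coeffWeight]
  · exact absurd rfl hj
  simp only [majorant, coeffWeight, if_pos (Nat.le_add_left 2 j)]
  have hpow : r ^ (2 * (k - 1)) * r ^ (j + 2) ≤ r ^ 2 := by
    rw [← pow_add]; exact pow_le_pow_of_le_one hr₀ hr₁ (by omega)
  have hsq : ((j + 2 : ℕ) : ℝ) ^ 2 ≤ ((2 * (k - 1) + (j + 2) ^ 2 : ℕ) : ℝ) := by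
    exact_mod_cast Nat.le_add_left _ _
  calc r ^ (2 * (k - 1)) * (((j + 2 : ℕ) : ℝ) ^ 2 * (‖a k (j + 2)‖ + ‖b k (j + 2)‖) * r ^ (j + 2))
      = ((j + 2 : ℕ) : ℝ) ^ 2 * (‖a k (j + 2)‖ + ‖b k (j + 2)‖)
          * (r ^ (2 * (k - 1)) * r ^ (j + 2)) := by ring
    _ ≤ ((2 * (k - 1) + (j + 2) ^ 2 : ℕ) : ℝ) * (‖a k (j + 2)‖ + ‖b k (j + 2)‖) * r ^ 2 := by
        gcongr
    _ = _ := by ring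

lemma pow_mul_majorant_one_le {r : ℝ} (hr₀ : 0 ≤ r) (hr₁ : r ≤ 1) {k : ℕ} (hk : 2 ≤ k) :
    r ^ (2 * (k - 1)) * majorant a b r k 1
      ≤ r ^ 2 * (((2 * k - 1 : ℕ) : ℝ) * (‖a k 1‖ + ‖b k 1‖)) := by
  have hpow : r ^ (2 * (k - 1) + 1) ≤ r ^ 2 := pow_le_pow_of_le_one hr₀ hr₁ (by omega)
  have hone : (1 : ℝ) ≤ ((2 * k - 1 : ℕ) : ℝ) := by exact_mod_cast (by omega : 1 ≤ 2 * k - 1)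
  calc r ^ (2 * (k - 1)) * majorant a b r k 1 = (‖a k 1‖ + ‖b k 1‖) * r ^ (2 * (k - 1) + 1) := by
        simp only [majorant]; push_cast; ring
    _ ≤ (‖a k 1‖ + ‖b k 1‖) * r ^ 2 := by gcongr
    _ ≤ ((2 * k - 1 : ℕ) : ℝ) * (‖a k 1‖ + ‖b k 1‖) * r ^ 2 := by
        gcongr; exact le_mul_of_one_le_left (by positivity) hone
    _ = _ := by ring

lemma norm_psiTerm_le_majorant {ζ : ℂ} (hζ : ‖ζ‖ = 1) (z : ℂ) (k j : ℕ) :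
    ‖psiTerm ζ (a k j) (b k j) z j‖ ≤ 2 * majorant a b ‖z‖ k j :=
  norm_psiTerm_le hζ _ _ _ j

variable {a b}

lemma summable_majorant {r : ℝ} (hr₀ : 0 ≤ r) (hr₁ : r ≤ 1) {k : ℕ}
    (hk : Summable (coeffWeight a b k)) : Summable (majorant a b r k) := by
  refine .of_norm_bounded_eventually_nat hk ?_
  filter_upwards [Filter.eventually_ge_atTop 2] with j hj
  rw [Real.norm_of_nonneg (by unfold majorant; positivity)]
  simp only [majorant, coeffWeight, if_pos hj]
  have hsq : (j : ℝ) ^ 2 ≤ ((2 * (k - 1) + j ^ 2 : ℕ) : ℝ) := by exact_mod_cast Nat.le_add_left _ _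
  calc (j : ℝ) ^ 2 * (‖a k j‖ + ‖b k j‖) * r ^ j ≤ (j : ℝ) ^ 2 * (‖a k j‖ + ‖b k j‖) * 1 := by
        gcongr; exact pow_le_one₀ hr₀ hr₁
    _ ≤ ((2 * (k - 1) + j ^ 2 : ℕ) : ℝ) * (‖a k j‖ + ‖b k j‖) := by
        rw [mul_one]; gcongr

variable {z ζ : ℂ}

lemma summable_psiTerm (hζ : ‖ζ‖ = 1) {k : ℕ} (hk : Summable (majorant a b ‖z‖ k)) :
    Summable fun j ↦ psiTerm ζ (a k j) (b k j) z j :=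
  .of_norm_bounded (hk.mul_left 2) (norm_psiTerm_le_majorant a b hζ z k)

lemma add_one_mul_polyLLF_sub_sub_one_mul_polyLF (p : ℕ)
    (hM : ∀ k ∈ Icc 1 p, Summable (majorant a b ‖z‖ k)) :
    (ζ + 1) * polyLLF p a b z - (ζ - 1) * polyLF p a b z
      = ∑ k ∈ Icc 1 p, (‖z‖ : ℂ) ^ (2 * (k - 1)) * ∑' j, psiTerm ζ (a k j) (b k j) z j := by
  unfold polyLLF polyLF
  rw [mul_sum, mul_sum, ← sum_sub_distrib]
  refine sum_congr rfl fun k hk ↦ ?_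
  have hLL : Summable fun j : ℕ ↦ (j : ℂ) ^ 2 * (a k j * z ^ j + conj (b k j * z ^ j)) :=
    .of_norm_bounded (hM k hk) fun j ↦ by
      rw [norm_mul, norm_pow, Complex.norm_natCast, majorant, mul_assoc]
      exact mul_le_mul_of_nonneg_left (norm_mul_add_conj_le _ _ _ j) (by positivity)
  have hL : Summable fun j : ℕ ↦ (j : ℂ) * (a k j * z ^ j - conj (b k j * z ^ j)) :=
    .of_norm_bounded (hM k hk) fun j ↦ by
      have hj : (j : ℝ) ≤ (j : ℝ) ^ 2 := by exact_mod_cast Nat.le_self_pow two_ne_zero j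
      rw [norm_mul, Complex.norm_natCast, majorant, mul_assoc]
      exact mul_le_mul hj (norm_mul_sub_conj_le _ _ _ j) (norm_nonneg _) (by positivity)
  simp only [psiTerm]
  rw [(hLL.mul_left _).tsum_sub (hL.mul_left _), tsum_mul_left, tsum_mul_left]
  ring

lemma norm_tsum_psiTerm_sub_psiTerm_one_le (hζ : ‖ζ‖ = 1) (hz : ‖z‖ ≤ 1)
    (hψ : Summable fun j ↦ psiTerm ζ (a 1 j) (b 1 j) z j) (hw : Summable (coeffWeight a b 1)) :
    ‖∑' j, psiTerm ζ (a 1 j) (b 1 j) z j - psiTerm ζ (a 1 1) (b 1 1) z 1‖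
      ≤ 2 * ‖z‖ ^ 2 * ∑' j, coeffWeight a b 1 j := by
  rw [hψ.tsum_eq_add_tsum_ite 1, add_sub_cancel_left]
  refine tsum_of_norm_bounded (hw.hasSum.mul_left _) fun j ↦ ?_
  split_ifs with hj
  · rw [norm_zero]; have := coeffWeight_nonneg a b 1 j; positivity
  · have := pow_mul_majorant_le_of_ne_one a b (norm_nonneg z) hz 1 hj
    rw [Nat.sub_self, mul_zero, pow_zero, one_mul] at this
    linarith [norm_psiTerm_le_majorant a b hζ z 1 j]

lemma norm_pow_mul_tsum_psiTerm_le (hζ : ‖ζ‖ = 1) (hz : ‖z‖ ≤ 1) {k : ℕ} (hk : 2 ≤ k)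
    (hw : Summable (coeffWeight a b k)) :
    ‖(‖z‖ : ℂ) ^ (2 * (k - 1)) * ∑' j, psiTerm ζ (a k j) (b k j) z j‖
      ≤ 2 * ‖z‖ ^ 2 *
        (∑' j, coeffWeight a b k j + ((2 * k - 1 : ℕ) : ℝ) * (‖a k 1‖ + ‖b k 1‖)) := by
  rw [← tsum_mul_left]
  refine tsum_of_norm_bounded ((hw.hasSum.add (hasSum_ite_eq 1 _)).mul_left _) fun j ↦ ?_
  rw [norm_mul, norm_pow, Complex.norm_real, norm_norm]
  have hψ := mul_le_mul_of_nonneg_left (norm_psiTerm_le_majorant a b hζ z k j)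
    (pow_nonneg (norm_nonneg z) (2 * (k - 1)))
  rcases eq_or_ne j 1 with rfl | hj
  · have := pow_mul_majorant_one_le a b (norm_nonneg z) hz hk
    simp only [coeffWeight, if_true, Nat.not_ofNat_le_one, if_false, zero_add]
    linarith
  · have := pow_mul_majorant_le_of_ne_one a b (norm_nonneg z) hz k hj
    simp only [if_neg hj, add_zero]
    linarith

lemma psiTerm_one_one (B : ℂ) : psiTerm ζ 1 B z 1 = 2 * (z + ζ * conj (B * z)) := by
  simp only [psiTerm, pow_one]; push_cast; ring

lemma two_mul_mul_one_sub_le_norm_psiTerm_one_one (hζ : ‖ζ‖ = 1) (B : ℂ) :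
    2 * ‖z‖ * (1 - ‖B‖) ≤ ‖psiTerm ζ 1 B z 1‖ := by
  have h := norm_sub_norm_le z (-(ζ * conj (B * z)))
  rw [norm_neg, norm_mul, hζ, Complex.norm_conj, norm_mul, sub_neg_eq_add] at h
  rw [psiTerm_one_one, norm_mul, Complex.norm_two]
  nlinarith

lemma norm_sum_sub_psiTerm_one_one_le {p : ℕ} (hp : 1 ≤ p)
    (hζ : ‖ζ‖ = 1) (hz : ‖z‖ ≤ 1) (hw : ∀ k ∈ Icc 1 p, Summable (coeffWeight a b k)) :
    ‖∑ k ∈ Icc 1 p, (‖z‖ : ℂ) ^ (2 * (k - 1)) * ∑' j, psiTerm ζ (a k j) (b k j) z j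
        - psiTerm ζ (a 1 1) (b 1 1) z 1‖
      ≤ 2 * ‖z‖ ^ 2 * (∑ k ∈ Icc 1 p, ∑' j, coeffWeight a b k j
        + ∑ k ∈ Icc 2 p, ((2 * k - 1 : ℕ) : ℝ) * (‖a k 1‖ + ‖b k 1‖)) := by
  have hsplit : Icc 1 p = insert 1 (Icc 2 p) := (insert_Icc_add_one_left_eq_Icc hp).symm
  have h1 : 1 ∈ Icc 1 p := by simp [hp]
  have hψ := summable_psiTerm hζ (summable_majorant (norm_nonneg z) hz (hw 1 h1))
  rw [hsplit, sum_insert (by simp), sum_insert (by simp)]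
  calc ‖(‖z‖ : ℂ) ^ (2 * (1 - 1)) * ∑' j, psiTerm ζ (a 1 j) (b 1 j) z j
          + ∑ k ∈ Icc 2 p, (‖z‖ : ℂ) ^ (2 * (k - 1)) * ∑' j, psiTerm ζ (a k j) (b k j) z j
          - psiTerm ζ (a 1 1) (b 1 1) z 1‖
      = ‖(∑' j, psiTerm ζ (a 1 j) (b 1 j) z j - psiTerm ζ (a 1 1) (b 1 1) z 1)
          + ∑ k ∈ Icc 2 p, (‖z‖ : ℂ) ^ (2 * (k - 1)) * ∑' j, psiTerm ζ (a k j) (b k j) z j‖ := by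
        rw [Nat.sub_self, mul_zero, pow_zero, one_mul, add_sub_right_comm]
    _ ≤ 2 * ‖z‖ ^ 2 * ∑' j, coeffWeight a b 1 j + ∑ k ∈ Icc 2 p, 2 * ‖z‖ ^ 2 *
          (∑' j, coeffWeight a b k j + ((2 * k - 1 : ℕ) : ℝ) * (‖a k 1‖ + ‖b k 1‖)) := by
        refine (norm_add_le _ _).trans (add_le_add ?_ ((norm_sum_le _ _).trans ?_))
        · exact norm_tsum_psiTerm_sub_psiTerm_one_le hζ hz hψ (hw 1 h1)
        · refine sum_le_sum fun k hk ↦ ?_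
          have hk₂ := (mem_Icc.mp hk).1
          exact norm_pow_mul_tsum_psiTerm_le hζ hz hk₂ (hw k (by simp at hk ⊢; omega))
    _ = _ := by simp only [mul_add, mul_sum, sum_add_distrib]; ring

end

theorem stmt_13_general (p : ℕ) (hp : 1 ≤ p) (a b : ℕ → ℕ → ℂ)
    (ha11 : a 1 1 = 1) (hb11 : ‖b 1 1‖ < 1)
    (hS : ∀ k ∈ Finset.Icc 1 p, Summable (fun j : ℕ =>
      if 2 ≤ j then ((2 * (k - 1) + j ^ 2 : ℕ) : ℝ) *
        (‖a k j‖ + ‖b k j‖) else 0))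
    (hcond : ∑ k ∈ Finset.Icc 1 p, ∑' j : ℕ,
        (if 2 ≤ j then ((2 * (k - 1) + j ^ 2 : ℕ) : ℝ) *
          (‖a k j‖ + ‖b k j‖) else 0)
      ≤ 1 - ‖b 1 1‖ -
        ∑ k ∈ Finset.Icc 2 p, ((2 * k - 1 : ℕ) : ℝ) *
          (‖a k 1‖ + ‖b k 1‖)) :
    ∀ z ∈ ball (0:ℂ) 1, z ≠ 0 → ∀ ζ : ℂ, ‖ζ‖ = 1 →
      (ζ + 1) * polyLLF p a b z - (ζ - 1) * polyLF p a b z ≠ 0 := by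
  intro z hz hz0 ζ hζ
  have hr₁ : ‖z‖ < 1 := mem_ball_zero_iff.mp hz
  have hr₀ : 0 < ‖z‖ := norm_pos_iff.mpr hz0
  have hcond' : ∑ k ∈ Icc 1 p, ∑' j, coeffWeight a b k j
      ≤ 1 - ‖b 1 1‖ - ∑ k ∈ Icc 2 p, ((2 * k - 1 : ℕ) : ℝ) * (‖a k 1‖ + ‖b k 1‖) := hcond
  rw [add_one_mul_polyLLF_sub_sub_one_mul_polyLF p fun k hk ↦
    summable_majorant (norm_nonneg z) hr₁.le (hS k hk)]
  intro hΨ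
  have hrest := norm_sum_sub_psiTerm_one_one_le hp hζ hr₁.le hS
  rw [hΨ, zero_sub, norm_neg] at hrest
  have hmain := two_mul_mul_one_sub_le_norm_psiTerm_one_one (z := z) hζ (b 1 1)
  rw [← ha11] at hmain
  have hbudget : 2 * ‖z‖ ^ 2 * (∑ k ∈ Icc 1 p, ∑' j, coeffWeight a b k j
      + ∑ k ∈ Icc 2 p, ((2 * k - 1 : ℕ) : ℝ) * (‖a k 1‖ + ‖b k 1‖))
      ≤ 2 * ‖z‖ ^ 2 * (1 - ‖b 1 1‖) := by gcongr; linarith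
  have hr : 2 * ‖z‖ ^ 2 * (1 - ‖b 1 1‖) < 2 * ‖z‖ * (1 - ‖b 1 1‖) := by
    refine mul_lt_mul_of_pos_right ?_ (sub_pos.mpr hb11)
    nlinarith
  linarith

theorem stmt_13 (p : ℕ) (hp : 1 ≤ p) (a b : ℕ → ℕ → ℂ)
    (ha11 : a 1 1 = 1) (hb11 : ‖b 1 1‖ < 1)
    (hzero : ∀ k, a k 0 = 0 ∧ b k 0 = 0)
    (hS : ∀ k ∈ Finset.Icc 1 p, Summable (fun j : ℕ =>
      if 2 ≤ j then ((2 * (k - 1) + j ^ 2 : ℕ) : ℝ) *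
        (‖a k j‖ + ‖b k j‖) else 0))
    (hcond : ∑ k ∈ Finset.Icc 1 p, ∑' j : ℕ,
        (if 2 ≤ j then ((2 * (k - 1) + j ^ 2 : ℕ) : ℝ) *
          (‖a k j‖ + ‖b k j‖) else 0)
      ≤ 1 - ‖b 1 1‖ -
        ∑ k ∈ Finset.Icc 2 p, ((2 * k - 1 : ℕ) : ℝ) *
          (‖a k 1‖ + ‖b k 1‖))
    (hlt : ‖b 1 1‖ + ∑ k ∈ Finset.Icc 2 p, ((2 * k - 1 : ℕ) : ℝ) *
          (‖a k 1‖ + ‖b k 1‖) < 1)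
    (hnaff : ¬ ∀ z : ℂ, polyF p a b z = z + (starRingEnd ℂ) (b 1 1 * z)) :
    ∀ z ∈ ball (0:ℂ) 1, z ≠ 0 → ∀ ζ : ℂ, ‖ζ‖ = 1 →
      (ζ + 1) * polyLLF p a b z - (ζ - 1) * polyLF p a b z ≠ 0 :=
  stmt_13_general p hp a b ha11 hb11 hS hcond
end

section
/- If F ∈ HC_p with a_{k,1} = 0 for all k ∈ {2,...,p}, and for 0 < r < 1 we set F_r(z) = Σ_{k=1}^p r^{2(k-1)}(h_k(z) + conj(g_k(z))), then the coefficients A_j = Σ_{k=1}^p a_{k,j} r^{2(k-1)} and B_j = Σ_{k=1}^p b_{k,j} r^{2(k-1)} of F_r satisfy Σ_{j≥2} j²(|A_j| + |B_j|) ≤ 1 - |B_1|, i.e., F_r belongs to the harmonic class HC. -/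
open Complex Metric Finset

/-! Since `0 < r < 1`, every weight `r^(2(k-1))` has modulus at most one, so by the triangle
inequality each coefficient of `F_r` is bounded by `∑ₖ |a_{k,j}|` (resp. `∑ₖ |b_{k,j}|`). The
`HC_p` weights dominate what `HC` asks for: `2(k-1) + j² ≥ j²` for `j ≥ 2`, and `2k - 1 ≥ 1`
pays for the contributions `b_{k,1}`, `k ≥ 2`, to `B₁`. -/

theorem norm_sum_mul_le_sum_norm {ι R : Type*} [SeminormedRing R] (s : Finset ι) (c w : ι → R)
    (hw : ∀ k ∈ s, ‖w k‖ ≤ 1) : ‖∑ k ∈ s, c k * w k‖ ≤ ∑ k ∈ s, ‖c k‖ :=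
  (norm_sum_le _ _).trans <| sum_le_sum fun k hk =>
    (norm_mul_le _ _).trans <| mul_le_of_le_one_right (norm_nonneg _) (hw k hk)

theorem mul_norm_add_norm_le_sum {ι R : Type*} [SeminormedRing R] (s : Finset ι) (x y w : ι → R)
    (hw : ∀ k ∈ s, ‖w k‖ ≤ 1) {t : ℝ} (ht : 0 ≤ t) (c : ι → ℝ) (hc : ∀ k ∈ s, t ≤ c k) :
    t * (‖∑ k ∈ s, x k * w k‖ + ‖∑ k ∈ s, y k * w k‖) ≤ ∑ k ∈ s, c k * (‖x k‖ + ‖y k‖) :=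
  calc t * (‖∑ k ∈ s, x k * w k‖ + ‖∑ k ∈ s, y k * w k‖)
      ≤ t * (∑ k ∈ s, ‖x k‖ + ∑ k ∈ s, ‖y k‖) := by
        gcongr <;> exact norm_sum_mul_le_sum_norm s _ w hw
    _ = ∑ k ∈ s, t * (‖x k‖ + ‖y k‖) := by rw [← sum_add_distrib, mul_sum]
    _ ≤ ∑ k ∈ s, c k * (‖x k‖ + ‖y k‖) := sum_le_sum fun k hk => by gcongr; exact hc k hk

theorem tsum_le_sum_tsum_of_le_sum {ι β : Type*} {f : β → ℝ} (s : Finset ι) (g : ι → β → ℝ)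
    (hf : ∀ j, 0 ≤ f j) (hfg : ∀ j, f j ≤ ∑ k ∈ s, g k j) (hg : ∀ k ∈ s, Summable (g k)) :
    ∑' j, f j ≤ ∑ k ∈ s, ∑' j, g k j := by
  have hsum : Summable fun j => ∑ k ∈ s, g k j := summable_sum hg
  calc ∑' j, f j ≤ ∑' j, ∑ k ∈ s, g k j := (hsum.of_nonneg_of_le hf hfg).tsum_le_tsum hfg hsum
    _ = ∑ k ∈ s, ∑' j, g k j := Summable.tsum_finsetSum hg

theorem sum_norm_Icc_one_le_norm_add_weighted {E : Type*} [SeminormedAddCommGroup E] (p : ℕ) (x y : ℕ → E) :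
    ∑ k ∈ Icc 1 p, ‖y k‖ ≤ ‖y 1‖ + ∑ k ∈ Icc 2 p, ((2 * k - 1 : ℕ) : ℝ) * (‖x k‖ + ‖y k‖) :=
  calc ∑ k ∈ Icc 1 p, ‖y k‖ ≤ ∑ k ∈ insert 1 (Icc 2 p), ‖y k‖ :=
        sum_le_sum_of_subset_of_nonneg (fun k hk => by simp at hk ⊢; omega)
          fun _ _ _ => norm_nonneg _
    _ = ‖y 1‖ + ∑ k ∈ Icc 2 p, ‖y k‖ := sum_insert (by simp)
    _ ≤ ‖y 1‖ + ∑ k ∈ Icc 2 p, ((2 * k - 1 : ℕ) : ℝ) * (‖x k‖ + ‖y k‖) := by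
        gcongr with k hk
        have hk1 : (1 : ℝ) ≤ ((2 * k - 1 : ℕ) : ℝ) := by
          have := (mem_Icc.mp hk).1
          exact_mod_cast (by omega : 1 ≤ 2 * k - 1)
        nlinarith [norm_nonneg (x k), norm_nonneg (y k)]

theorem stmt_15_general (p : ℕ) (a b : ℕ → ℕ → ℂ) (r : ℝ)
    (hr0 : 0 < r) (hr1 : r < 1)
    (hS : ∀ k ∈ Finset.Icc 1 p, Summable (fun j : ℕ =>
      if 2 ≤ j then ((2 * (k - 1) + j ^ 2 : ℕ) : ℝ) *
        (‖a k j‖ + ‖b k j‖) else 0))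
    (hcond : ∑ k ∈ Finset.Icc 1 p, ∑' j : ℕ,
        (if 2 ≤ j then ((2 * (k - 1) + j ^ 2 : ℕ) : ℝ) *
          (‖a k j‖ + ‖b k j‖) else 0)
      ≤ 1 - ‖b 1 1‖ -
        ∑ k ∈ Finset.Icc 2 p, ((2 * k - 1 : ℕ) : ℝ) *
          (‖a k 1‖ + ‖b k 1‖))
    (A B : ℕ → ℂ)
    (hA : ∀ j, A j = ∑ k ∈ Finset.Icc 1 p, a k j * (r : ℂ) ^ (2 * (k - 1)))
    (hB : ∀ j, B j = ∑ k ∈ Finset.Icc 1 p, b k j * (r : ℂ) ^ (2 * (k - 1))) :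
    ∑' j : ℕ, (if 2 ≤ j then ((j : ℝ)) ^ 2 * (‖A j‖ + ‖B j‖) else 0)
      ≤ 1 - ‖B 1‖ := by
  have hw : ∀ k ∈ Icc 1 p, ‖(r : ℂ) ^ (2 * (k - 1))‖ ≤ 1 := fun k _ => by
    rw [norm_pow, norm_real, Real.norm_of_nonneg hr0.le]
    exact pow_le_one₀ hr0.le hr1.le
  have hB1 : ‖B 1‖ ≤ ‖b 1 1‖ + ∑ k ∈ Icc 2 p, ((2 * k - 1 : ℕ) : ℝ) * (‖a k 1‖ + ‖b k 1‖) :=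
    (hB 1 ▸ norm_sum_mul_le_sum_norm _ _ _ hw).trans (sum_norm_Icc_one_le_norm_add_weighted p (a · 1) (b · 1))
  have hcoef : ∀ j : ℕ, (if 2 ≤ j then (j : ℝ) ^ 2 * (‖A j‖ + ‖B j‖) else 0) ≤
      ∑ k ∈ Icc 1 p, if 2 ≤ j then ((2 * (k - 1) + j ^ 2 : ℕ) : ℝ) * (‖a k j‖ + ‖b k j‖)
        else 0 := fun j => by
    split_ifs
    · rw [hA, hB]
      exact mul_norm_add_norm_le_sum _ _ _ _ hw (sq_nonneg _) _
        fun k _ => by exact_mod_cast Nat.le_add_left (j ^ 2) (2 * (k - 1))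
    · simp
  calc _ ≤ _ := tsum_le_sum_tsum_of_le_sum _ _ (fun j => by split_ifs <;> positivity) hcoef hS
    _ ≤ _ := hcond
    _ ≤ 1 - ‖B 1‖ := by linarith

theorem stmt_15 (p : ℕ) (hp : 1 ≤ p) (a b : ℕ → ℕ → ℂ) (r : ℝ)
    (hr0 : 0 < r) (hr1 : r < 1)
    (ha11 : a 1 1 = 1) (hak1 : ∀ k ∈ Finset.Icc 2 p, a k 1 = 0)
    (hS : ∀ k ∈ Finset.Icc 1 p, Summable (fun j : ℕ =>
      if 2 ≤ j then ((2 * (k - 1) + j ^ 2 : ℕ) : ℝ) *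
        (‖a k j‖ + ‖b k j‖) else 0))
    (hcond : ∑ k ∈ Finset.Icc 1 p, ∑' j : ℕ,
        (if 2 ≤ j then ((2 * (k - 1) + j ^ 2 : ℕ) : ℝ) *
          (‖a k j‖ + ‖b k j‖) else 0)
      ≤ 1 - ‖b 1 1‖ -
        ∑ k ∈ Finset.Icc 2 p, ((2 * k - 1 : ℕ) : ℝ) *
          (‖a k 1‖ + ‖b k 1‖))
    (hlt : ‖b 1 1‖ + ∑ k ∈ Finset.Icc 2 p, ((2 * k - 1 : ℕ) : ℝ) *
          (‖a k 1‖ + ‖b k 1‖) < 1)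
    (A B : ℕ → ℂ)
    (hA : ∀ j, A j = ∑ k ∈ Finset.Icc 1 p, a k j * (r : ℂ) ^ (2 * (k - 1)))
    (hB : ∀ j, B j = ∑ k ∈ Finset.Icc 1 p, b k j * (r : ℂ) ^ (2 * (k - 1))) :
    ∑' j : ℕ, (if 2 ≤ j then ((j : ℝ)) ^ 2 * (‖A j‖ + ‖B j‖) else 0)
      ≤ 1 - ‖B 1‖ :=
  stmt_15_general p a b r hr0 hr1 hS hcond A B hA hB
end
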